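/- Let A be a countable alphabet, P a probability distribution on A, and D a proper and almost surely complete dictionary over A. Then for every positive integer m the sandwich inequalities -∑_{α∈D, |α|<m} P(α) log₂ P(α) ≤ H(D_m) ≤ H(D) hold, and consequently lim_{m→∞} H(D_m) = H(D), where H(E) = -∑_{α∈E} P(α) log₂ P(α) (sums in [0,∞]) and D_m = {α ∈ D : |α| < m} ∪ {α ∈ D : |α| = m} ∪ T_m with T_m = {α ∈ A^m : no β ∈ D is a prefix of α}. -/

import Mathlib

open scoped ENNReal
open Filter

/-- The probability of a finite string, obtained by extending the
distribution `P` multiplicatively: `P(a₁⋯aₙ) = ∏ᵢ P(aᵢ)`. -/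
noncomputable def strProb {A : Type*} (P : PMF A) (l : List A) : ℝ≥0∞ :=
  (l.map fun a => P a).prod

/-- A dictionary is a set of nonempty finite strings. -/
def IsDictionary {A : Type*} (D : Set (List A)) : Prop :=
  ∀ α ∈ D, α ≠ []

/-- A dictionary is proper if no string in it is a (proper) prefix of
another string in it. -/
def IsProper {A : Type*} (D : Set (List A)) : Prop :=
  ∀ α ∈ D, ∀ β ∈ D, α <+: β → α = β

/-- A dictionary is complete if every infinite sequence over `A` has a
prefix in it. -/
def IsCompleteDict {A : Type*} (D : Set (List A)) : Prop :=
  ∀ x : ℕ → A, ∃ α ∈ D, α = (List.range α.length).map x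

/-- The probability that the length-`n` prefix of a random infinite sequence
has some prefix belonging to `D`. -/
noncomputable def prefixProb {A : Type*} (P : PMF A) (D : Set (List A)) (n : ℕ) : ℝ≥0∞ :=
  ∑' γ : {γ : List A // γ.length = n ∧ ∃ β ∈ D, β <+: γ}, strProb P γ

/-- `D` is almost surely complete: under the infinite product measure `P^ℕ`,
the event that an infinite sequence has a prefix in `D` has probability `1`.
(By continuity from below, this probability is the limit, as `n → ∞`, of the
probability that the length-`n` prefix has a prefix in `D`.) -/
def IsASC {A : Type*} (P : PMF A) (D : Set (List A)) : Prop :=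
  Tendsto (prefixProb P D) atTop (nhds 1)

/-- `Tset D n` = strings of length `n` having no prefix in `D`. -/
def Tset {A : Type*} (D : Set (List A)) (n : ℕ) : Set (List A) :=
  {α | α.length = n ∧ ∀ β ∈ D, ¬ β <+: α}

/-- `Dperp D n = {α ∈ D : |α| = n} ∪ Tₙ`. -/
def Dperp {A : Type*} (D : Set (List A)) (n : ℕ) : Set (List A) :=
  {α ∈ D | α.length = n} ∪ Tset D n

/-- `Dn D n = {α ∈ D : |α| < n} ∪ Dₙ^⊥`. -/
def Dn {A : Type*} (D : Set (List A)) (n : ℕ) : Set (List A) :=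
  {α ∈ D | α.length < n} ∪ Dperp D n

/-- The one-letter extensions `αA = {αa : a ∈ A}` of a string `α`. -/
def oneExt {A : Type*} (α : List A) : Set (List A) :=
  {l | ∃ a : A, l = α ++ [a]}

/-- The extension `D[α] = (D \ {α}) ∪ αA` of a dictionary at `α`. -/
def extendDict {A : Type*} (D : Set (List A)) (α : List A) : Set (List A) :=
  (D \ {α}) ∪ oneExt α

/-- The nonnegative entropy contribution `-p log₂ p ∈ [0,∞]` of a
probability value `p`. -/
noncomputable def entTerm (p : ℝ≥0∞) : ℝ≥0∞ :=
  ENNReal.ofReal (-(p.toReal * Real.logb 2 p.toReal))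

/-- The entropy `H(E) = -∑_{α∈E} P(α) log₂ P(α)` of a dictionary, in `[0,∞]`. -/
noncomputable def dictEntropy {A : Type*} (P : PMF A) (E : Set (List A)) : ℝ≥0∞ :=
  ∑' α : E, entTerm (strProb P α)

/-- The average length `l̄(E) = ∑_{α∈E} P(α)|α|` of a dictionary, in `[0,∞]`. -/
noncomputable def avgLen {A : Type*} (P : PMF A) (E : Set (List A)) : ℝ≥0∞ :=
  ∑' α : E, strProb P α * (α : List A).length

/-- The source entropy `H(P) = -∑_{a∈A} P(a) log₂ P(a)`, in `[0,∞]`. -/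
noncomputable def srcEntropy {A : Type*} (P : PMF A) : ℝ≥0∞ :=
  ∑' a : A, entTerm (P a)

/-!
A string `α ∈ T_m` has no prefix in `D`; almost sure completeness says that the mass `P(α)` is
carried by the extensions of `α` lying in `D`, and these have smaller probability, so
`-P(α) log₂ P(α) ≤ ∑_{β ∈ D, α ≤ β} -P(β) log₂ P(β)`. The extension sets of distinct strings of
length `m` are disjoint and consist of words longer than `m`, hence `H(T_m)` is at most the
entropy of the part of `D` beyond length `m`. Splitting `D_m` and `D` at length `m` gives
`H(D_m) ≤ H(D)`. The lower bound increases to `H(D)` by monotone convergence, and `H(D_m)` is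
squeezed in between.
-/

theorem ENNReal.tendsto_tsum_subtype_of_monotone {α : Type*} (f : α → ℝ≥0∞) {s : ℕ → Set α}
    (hs : Monotone s) :
    Tendsto (fun n => ∑' x : s n, f x) atTop (nhds (∑' x : ⋃ n, s n, f x)) := by
  have hmono : ∀ x, Monotone fun n => (s n).indicator f x := fun x _ _ h =>
    Set.indicator_le_indicator_of_subset (hs h) (fun _ => zero_le) x
  have hsup : ∑' x : ⋃ n, s n, f x = ⨆ n, ∑' x : s n, f x := by
    simp_rw [tsum_subtype, Set.indicator_iUnion_apply (M := ℝ≥0∞) rfl, ENNReal.tsum_eq_iSup_sum,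
      ENNReal.finsetSum_iSup_of_monotone (fun x => hmono x)]
    exact iSup_comm
  rw [hsup]
  exact tendsto_atTop_iSup fun _ _ h => ENNReal.tsum_mono_subtype f (hs h)

section StrProb

variable {A : Type*} (P : PMF A)

lemma strProb_nil : strProb P ([] : List A) = 1 := by simp [strProb]

lemma strProb_cons (a : A) (l : List A) : strProb P (a :: l) = P a * strProb P l := by
  simp [strProb]

lemma strProb_append (l l' : List A) : strProb P (l ++ l') = strProb P l * strProb P l' := by
  simp [strProb]

lemma strProb_le_one (l : List A) : strProb P l ≤ 1 := by
  induction l with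
  | nil => simp [strProb_nil]
  | cons a t ih => simpa [strProb_cons] using mul_le_one' (P.coe_le_one a) ih

lemma strProb_ne_top (l : List A) : strProb P l ≠ ⊤ :=
  ne_top_of_le_ne_top ENNReal.one_ne_top (strProb_le_one P l)

lemma strProb_le_of_prefix {l l' : List A} (h : l <+: l') : strProb P l' ≤ strProb P l := by
  obtain ⟨t, rfl⟩ := h
  simpa [strProb_append] using mul_le_mul_right (strProb_le_one P t) (strProb P l)

def lengthSuccEquiv (A : Type*) (k : ℕ) :
    {δ : List A | δ.length = k + 1} ≃ A × {δ : List A | δ.length = k} where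
  toFun δ := match δ with
    | ⟨[], h⟩ => absurd h (by simp)
    | ⟨a :: t, h⟩ => (a, ⟨t, by simpa using h⟩)
  invFun p := ⟨p.1 :: p.2.1, congrArg Nat.succ p.2.2⟩
  left_inv := by
    rintro ⟨_ | ⟨a, t⟩, h⟩
    · simp at h
    · rfl
  right_inv := by rintro ⟨a, t, h⟩; rfl

lemma tsum_strProb_length_eq (n : ℕ) :
    ∑' γ : {γ : List A | γ.length = n}, strProb P γ = 1 := by
  induction n with
  | zero =>
    rw [tsum_eq_single (⟨[], rfl⟩ : {γ : List A | γ.length = 0})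
      (by rintro ⟨γ, h⟩ hne; exact absurd (Subtype.ext (List.length_eq_zero_iff.mp h)) hne)]
    exact strProb_nil P
  | succ k ih =>
    rw [← (lengthSuccEquiv A k).symm.tsum_eq, ENNReal.tsum_prod']
    simp_rw [lengthSuccEquiv, Equiv.coe_fn_symm_mk, strProb_cons, ENNReal.tsum_mul_left, ih,
      mul_one, P.tsum_coe]

def prefixExtEquiv (β : List A) (n : ℕ) (h : β.length ≤ n) :
    {γ : List A | γ.length = n ∧ β <+: γ} ≃ {δ : List A | δ.length = n - β.length} where
  toFun γ := ⟨γ.1.drop β.length, by rw [Set.mem_ofPred_eq, List.length_drop, γ.2.1]⟩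
  invFun δ := ⟨β ++ δ.1, by
    have hδ : δ.1.length = n - β.length := δ.2
    exact ⟨by rw [List.length_append]; omega, δ.1, rfl⟩⟩
  left_inv := by rintro ⟨γ, hlen, t, rfl⟩; simp
  right_inv := by rintro ⟨δ, hδ⟩; simp

lemma tsum_strProb_extensions {β : List A} {n : ℕ} (h : β.length ≤ n) :
    ∑' γ : {γ : List A | γ.length = n ∧ β <+: γ}, strProb P γ = strProb P β := by
  rw [← (prefixExtEquiv β n h).symm.tsum_eq]
  simp_rw [prefixExtEquiv, Equiv.coe_fn_symm_mk, strProb_append, ENNReal.tsum_mul_left,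
    tsum_strProb_length_eq, mul_one]

lemma tsum_strProb_extensions_le (β : List A) (n : ℕ) :
    ∑' γ : {γ : List A | γ.length = n ∧ β <+: γ}, strProb P γ ≤ strProb P β := by
  by_cases h : β.length ≤ n
  · exact (tsum_strProb_extensions P h).le
  · have hempty : {γ : List A | γ.length = n ∧ β <+: γ} = ∅ :=
      Set.eq_empty_of_forall_notMem fun γ ⟨hγ, hβγ⟩ => h (hγ ▸ hβγ.length_le)
    simp [hempty]

end StrProb

section Dictionary

variable {A : Type*} (P : PMF A) (D : Set (List A))

lemma prefixProb_add_tsum_Tset (n : ℕ) :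
    prefixProb P D n + ∑' γ : Tset D n, strProb P γ = 1 := by
  have hdisj : Disjoint {γ : List A | γ.length = n ∧ ∃ β ∈ D, β <+: γ} (Tset D n) :=
    Set.disjoint_left.2 fun γ ⟨_, β, hβ, hβγ⟩ ⟨_, hno⟩ => hno β hβ hβγ
  have hunion : {γ : List A | γ.length = n ∧ ∃ β ∈ D, β <+: γ} ∪ Tset D n =
      {γ | γ.length = n} := by
    ext γ
    simp only [Tset, Set.mem_union, Set.mem_ofPred_eq]
    grind
  change ∑' γ : ↥{γ : List A | γ.length = n ∧ ∃ β ∈ D, β <+: γ}, strProb P γ + _ = 1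
  rw [← ENNReal.summable.tsum_union_disjoint hdisj ENNReal.summable, hunion,
    tsum_strProb_length_eq]

lemma tendsto_tsum_Tset_zero (hasc : IsASC P D) :
    Tendsto (fun n => ∑' γ : Tset D n, strProb P γ) atTop (nhds 0) := by
  have hcompl : ∀ n, ∑' γ : Tset D n, strProb P γ = 1 - prefixProb P D n := fun n =>
    ENNReal.eq_sub_of_add_eq (ne_top_of_le_ne_top ENNReal.one_ne_top
      (le_self_add.trans (prefixProb_add_tsum_Tset P D n).le))
      ((add_comm _ _).trans (prefixProb_add_tsum_Tset P D n))
  simp_rw [hcompl]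
  simpa using ENNReal.Tendsto.sub tendsto_const_nhds hasc (Or.inl ENNReal.one_ne_top)

variable {P D}

lemma strProb_le_tsum_extensions_mem_add_tsum_Tset {α : List A} (hα : ∀ β ∈ D, ¬β <+: α)
    {n : ℕ} (hn : α.length ≤ n) :
    strProb P α ≤
      ∑' β : {β ∈ D | α <+: β}, strProb P β + ∑' γ : Tset D n, strProb P γ := by
  -- a length-`n` extension of `α` either lies in `T_n` or has a prefix in `D`, which extends `α`
  have hcover : {γ : List A | γ.length = n ∧ α <+: γ} ⊆
      (⋃ β ∈ {β ∈ D | α <+: β}, {γ : List A | γ.length = n ∧ β <+: γ}) ∪ Tset D n := by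
    rintro γ ⟨hγ, hαγ⟩
    by_cases hpre : ∃ β ∈ D, β <+: γ
    · obtain ⟨β, hβ, hβγ⟩ := hpre
      have hαβ : α <+: β := by
        rcases le_total α.length β.length with hle | hle
        · exact List.prefix_of_prefix_length_le hαγ hβγ hle
        · exact absurd (List.prefix_of_prefix_length_le hβγ hαγ hle) (hα β hβ)
      exact Or.inl (Set.mem_biUnion ⟨hβ, hαβ⟩ ⟨hγ, hβγ⟩)
    · push Not at hpre
      exact Or.inr ⟨hγ, hpre⟩
  calc strProb P α
      = ∑' γ : {γ : List A | γ.length = n ∧ α <+: γ}, strProb P γ :=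
        (tsum_strProb_extensions P hn).symm
    _ ≤ ∑' γ : ↥((⋃ β ∈ {β ∈ D | α <+: β}, {γ : List A | γ.length = n ∧ β <+: γ}) ∪ Tset D n),
          strProb P γ := ENNReal.tsum_mono_subtype _ hcover
    _ ≤ ∑' γ : ⋃ β ∈ {β ∈ D | α <+: β}, {γ : List A | γ.length = n ∧ β <+: γ}, strProb P γ +
          ∑' γ : Tset D n, strProb P γ := ENNReal.tsum_union_le _ _ _
    _ ≤ ∑' β : {β ∈ D | α <+: β}, ∑' γ : {γ : List A | γ.length = n ∧ β.1 <+: γ}, strProb P γ +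
          ∑' γ : Tset D n, strProb P γ := by gcongr; exact ENNReal.tsum_biUnion_le_tsum _ _ _
    _ ≤ ∑' β : {β ∈ D | α <+: β}, strProb P β + ∑' γ : Tset D n, strProb P γ := by
        gcongr with β; exact tsum_strProb_extensions_le P β n

lemma strProb_le_tsum_extensions_mem (hasc : IsASC P D) {α : List A}
    (hα : ∀ β ∈ D, ¬β <+: α) :
    strProb P α ≤ ∑' β : {β ∈ D | α <+: β}, strProb P β := by
  have hlim := (tendsto_const_nhds (x := ∑' β : {β ∈ D | α <+: β}, strProb P β)).add
    (tendsto_tsum_Tset_zero P D hasc)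
  rw [add_zero] at hlim
  exact ge_of_tendsto hlim (eventually_atTop.2
    ⟨α.length, fun n hn => strProb_le_tsum_extensions_mem_add_tsum_Tset hα hn⟩)

end Dictionary

section Entropy

lemma entTerm_eq_mul {q : ℝ≥0∞} (hq : q ≠ ⊤) :
    entTerm q = q * ENNReal.ofReal (-Real.logb 2 q.toReal) := by
  rw [entTerm, neg_mul_eq_mul_neg, ENNReal.ofReal_mul ENNReal.toReal_nonneg,
    ENNReal.ofReal_toReal hq]

lemma mul_ofReal_neg_logb_le_entTerm {p q : ℝ≥0∞} (hpq : p ≤ q) (hq : q ≠ ⊤) :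
    p * ENNReal.ofReal (-Real.logb 2 q.toReal) ≤ entTerm p := by
  rcases eq_or_ne p 0 with rfl | hp
  · simp
  have hpt : 0 < p.toReal := ENNReal.toReal_pos hp (ne_top_of_le_ne_top hq hpq)
  rw [entTerm_eq_mul (ne_top_of_le_ne_top hq hpq)]
  exact mul_le_mul_right (ENNReal.ofReal_le_ofReal (neg_le_neg
    (Real.logb_le_logb_of_le one_lt_two hpt (ENNReal.toReal_mono hq hpq)))) p

variable {A : Type*} {P : PMF A} {D : Set (List A)}

lemma entTerm_strProb_le_tsum_extensions_mem (hasc : IsASC P D) {α : List A}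
    (hα : ∀ β ∈ D, ¬β <+: α) :
    entTerm (strProb P α) ≤ ∑' β : {β ∈ D | α <+: β}, entTerm (strProb P β) := by
  calc entTerm (strProb P α)
      = strProb P α * ENNReal.ofReal (-Real.logb 2 (strProb P α).toReal) :=
        entTerm_eq_mul (strProb_ne_top P α)
    _ ≤ (∑' β : {β ∈ D | α <+: β}, strProb P β) *
          ENNReal.ofReal (-Real.logb 2 (strProb P α).toReal) := by
        gcongr; exact strProb_le_tsum_extensions_mem hasc hα
    _ = ∑' β : {β ∈ D | α <+: β},
          strProb P β * ENNReal.ofReal (-Real.logb 2 (strProb P α).toReal) :=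
        ENNReal.tsum_mul_right.symm
    _ ≤ ∑' β : {β ∈ D | α <+: β}, entTerm (strProb P β) :=
        ENNReal.tsum_le_tsum fun β =>
          mul_ofReal_neg_logb_le_entTerm (strProb_le_of_prefix P β.2.2) (strProb_ne_top P α)

variable (P)

lemma dictEntropy_union {s t : Set (List A)} (hd : Disjoint s t) :
    dictEntropy P (s ∪ t) = dictEntropy P s + dictEntropy P t :=
  ENNReal.summable.tsum_union_disjoint (f := fun l => entTerm (strProb P l)) hd ENNReal.summable

lemma dictEntropy_mono {s t : Set (List A)} (h : s ⊆ t) : dictEntropy P s ≤ dictEntropy P t :=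
  ENNReal.tsum_mono_subtype (fun l => entTerm (strProb P l)) h

lemma dictEntropy_Tset_le (hasc : IsASC P D) (m : ℕ) :
    dictEntropy P (Tset D m) ≤ dictEntropy P {β ∈ D | m < β.length} := by
  have hdisj : (Tset D m).PairwiseDisjoint fun α => {β ∈ D | α <+: β} := by
    intro α hα α' hα' hne
    have hlen : α.length = α'.length := hα.1.trans hα'.1.symm
    refine Set.disjoint_left.2 fun β ⟨_, hαβ⟩ ⟨_, hα'β⟩ => hne ?_
    exact (List.prefix_of_prefix_length_le hαβ hα'β hlen.le).eq_of_length hlen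
  have hsub : (⋃ α ∈ Tset D m, {β ∈ D | α <+: β}) ⊆ {β ∈ D | m < β.length} := by
    simp only [Set.iUnion_subset_iff]
    rintro α ⟨hαm, hno⟩ β ⟨hβ, hαβ⟩
    refine ⟨hβ, (hαm ▸ hαβ.length_le).lt_of_ne fun heq => hno β hβ ?_⟩
    exact (hαβ.eq_of_length (hαm.trans heq)) ▸ List.prefix_refl α
  calc dictEntropy P (Tset D m)
      ≤ ∑' α : Tset D m, ∑' β : {β ∈ D | α.1 <+: β}, entTerm (strProb P β) :=
        ENNReal.tsum_le_tsum fun α => entTerm_strProb_le_tsum_extensions_mem hasc α.2.2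
    _ = dictEntropy P (⋃ α ∈ Tset D m, {β ∈ D | α <+: β}) :=
          (ENNReal.tsum_biUnion' (f := fun l => entTerm (strProb P l)) hdisj).symm
    _ ≤ dictEntropy P {β ∈ D | m < β.length} := dictEntropy_mono P hsub

lemma Dn_eq_union (m : ℕ) : Dn D m = {α ∈ D | α.length ≤ m} ∪ Tset D m := by
  ext α
  simp only [Dn, Dperp, Set.mem_union, Set.mem_ofPred_eq, le_iff_lt_or_eq]
  tauto

lemma dictEntropy_Dn_le (hasc : IsASC P D) (m : ℕ) : dictEntropy P (Dn D m) ≤ dictEntropy P D := by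
  have hDn : Disjoint {α ∈ D | α.length ≤ m} (Tset D m) :=
    Set.disjoint_left.2 fun α ⟨hα, _⟩ ⟨_, hno⟩ => hno α hα (List.prefix_refl α)
  have hD : D = {α ∈ D | α.length ≤ m} ∪ {α ∈ D | m < α.length} := by
    ext α
    simp only [Set.mem_union, Set.mem_ofPred_eq]
    have := le_or_gt α.length m
    tauto
  have hD' : Disjoint {α ∈ D | α.length ≤ m} {α ∈ D | m < α.length} :=
    Set.disjoint_left.2 fun α ⟨_, hle⟩ ⟨_, hlt⟩ => (hle.not_gt hlt).elim
  calc dictEntropy P (Dn D m)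
      = dictEntropy P {α ∈ D | α.length ≤ m} + dictEntropy P (Tset D m) := by
        rw [Dn_eq_union, dictEntropy_union P hDn]
    _ ≤ dictEntropy P {α ∈ D | α.length ≤ m} + dictEntropy P {α ∈ D | m < α.length} := by
        gcongr; exact dictEntropy_Tset_le P hasc m
    _ = dictEntropy P D := by rw [← dictEntropy_union P hD', ← hD]

lemma tendsto_dictEntropy_sep_length_lt (D : Set (List A)) :
    Tendsto (fun m => dictEntropy P {α ∈ D | α.length < m}) atTop (nhds (dictEntropy P D)) := by
  have hunion : (⋃ m, {α ∈ D | α.length < m}) = D := by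
    ext α
    simp only [Set.mem_iUnion, Set.mem_ofPred_eq]
    exact ⟨fun ⟨_, hα⟩ => hα.1, fun hα => ⟨α.length + 1, hα, α.length.lt_succ_self⟩⟩
  have hmono : Monotone fun m => {α ∈ D | α.length < m} :=
    fun _ _ h _ hα => ⟨hα.1, hα.2.trans_le h⟩
  have hlim := ENNReal.tendsto_tsum_subtype_of_monotone (fun l => entTerm (strProb P l)) hmono
  rwa [hunion] at hlim

end Entropy

theorem dictEntropy_Dn_sandwich_and_tendsto_general {A : Type*}
    (P : PMF A) (D : Set (List A)) (hasc : IsASC P D) :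
    (∀ m : ℕ, 0 < m →
      dictEntropy P {α ∈ D | α.length < m} ≤ dictEntropy P (Dn D m) ∧
      dictEntropy P (Dn D m) ≤ dictEntropy P D) ∧
    Tendsto (fun m : ℕ => dictEntropy P (Dn D m)) atTop
      (nhds (dictEntropy P D)) := by
  have hlower : ∀ m, dictEntropy P {α ∈ D | α.length < m} ≤ dictEntropy P (Dn D m) :=
    fun m => dictEntropy_mono P Set.subset_union_left
  refine ⟨fun m _ => ⟨hlower m, dictEntropy_Dn_le P hasc m⟩, ?_⟩
  exact tendsto_of_tendsto_of_tendsto_of_le_of_le (tendsto_dictEntropy_sep_length_lt P D)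
    tendsto_const_nhds hlower (dictEntropy_Dn_le P hasc)

/-- If `D` is proper and almost surely complete then, for
every positive integer `m`,
`-∑_{α∈D,|α|<m} P(α) log₂ P(α) ≤ H(D_m) ≤ H(D)`, and consequently
`lim_{m→∞} H(D_m) = H(D)`. -/
theorem dictEntropy_Dn_sandwich_and_tendsto {A : Type*} [Countable A]
    (P : PMF A) (D : Set (List A)) (hdict : IsDictionary D)
    (hprop : IsProper D) (hasc : IsASC P D) :
    (∀ m : ℕ, 0 < m →
      dictEntropy P {α ∈ D | α.length < m} ≤ dictEntropy P (Dn D m) ∧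
      dictEntropy P (Dn D m) ≤ dictEntropy P D) ∧
    Tendsto (fun m : ℕ => dictEntropy P (Dn D m)) atTop
      (nhds (dictEntropy P D)) :=
  dictEntropy_Dn_sandwich_and_tendsto_general P D hasc
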